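/- arXiv:2604.04087 — 2 statements merged into one kernel-verified Lean document; each statement's English description precedes it below -/
import Mathlib

section
/- For any two permutations π, σ of {1,…,V}, the Kendall tau distance d_K(π,σ) (the number of pairs (i,j) with i<j on which π and σ disagree in relative order) and Spearman's footrule d_F(π,σ) = Σ_{i=1}^V |π(i) - σ(i)| satisfy d_K(π,σ) ≤ d_F(π,σ) ≤ 2·d_K(π,σ). -/
/-!
Upper bound: `π x` is the number of items placed before `x` by `π`, so `|π x - σ x|` is at
most the number of items `y` that `π` and `σ` order differently relative to `x`; summing over
`x` counts every discordant pair twice.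

Lower bound, by strong induction on the footrule: if `π ≠ σ`, let `u` be the smallest position
holding different items, `a` the item `σ` puts there and `b` the one `π` puts there. Exchanging
`a` and `b` in `σ` lowers the footrule by `2 (min (π a) (σ b) - u)`. By the triangle inequality
for the Kendall distance it lowers the Kendall distance by at most the number of pairs whose order
changes when `a` and `b` are exchanged in `σ`, or in `π`; that is `2 (σ b - u) - 1`, resp.
`2 (π a - u) - 1`, less than the drop of the footrule.
-/

open Finset

/-- Spearman's footrule distance. -/
def footrule {V : ℕ} (π σ : Equiv.Perm (Fin V)) : ℕ :=
  ∑ i : Fin V, (((π i : ℕ) : ℤ) - ((σ i : ℕ) : ℤ)).natAbs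

/-- Kendall tau distance: number of discordant pairs. -/
def kendall {V : ℕ} (π σ : Equiv.Perm (Fin V)) : ℕ :=
  (Finset.univ.filter fun p : Fin V × Fin V =>
    p.1 < p.2 ∧ ¬ ((π p.1 < π p.2) ↔ (σ p.1 < σ p.2))).card

open Equiv

namespace Finset

variable {α β : Type*} [Fintype α] [Fintype β] [DecidableEq α] [DecidableEq β]

theorem sum_card_filter_mk_mem_left (s : Finset (α × β)) : ∑ x, #{y | (x, y) ∈ s} = #s := by
  simp only [card_filter, ← Fintype.sum_prod_type']
  simp

theorem sum_card_filter_mk_mem_right (s : Finset (α × β)) : ∑ y, #{x | (x, y) ∈ s} = #s := by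
  simp only [card_filter]
  rw [sum_comm]
  simp only [← Fintype.sum_prod_type']
  simp

end Finset

section
variable {V : ℕ}

/-- Each discordant pair of `kendall` appears here once, ordered as `π` orders it. -/
def discordantPairs (π σ : Perm (Fin V)) : Finset (Fin V × Fin V) :=
  {p | π p.1 < π p.2 ∧ σ p.2 < σ p.1}

@[simp]
theorem mem_discordantPairs {π σ : Perm (Fin V)} {p : Fin V × Fin V} :
    p ∈ discordantPairs π σ ↔ π p.1 < π p.2 ∧ σ p.2 < σ p.1 := by
  simp [discordantPairs]

theorem kendall_eq_card_discordantPairs (π σ : Perm (Fin V)) :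
    kendall π σ = #(discordantPairs π σ) := by
  refine card_nbij' (fun p => if π p.1 < π p.2 then p else p.swap)
    (fun p => if p.1 < p.2 then p else p.swap) ?_ ?_ ?_ ?_ <;>
  · rintro ⟨x, y⟩
    have := π.injective.eq_iff (a := x) (b := y)
    have := σ.injective.eq_iff (a := x) (b := y)
    simp only [coe_filter, mem_univ, true_and, mem_coe, mem_discordantPairs]
    grind

theorem card_filter_apply_lt (π : Perm (Fin V)) (x : Fin V) : #{y | π y < π x} = π x := by
  rw [card_equiv π (t := Iio (π x)) (by simp), Fin.card_Iio]

theorem natAbs_apply_sub_apply_le (π σ : Perm (Fin V)) (x : Fin V) :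
    (((π x : ℕ) : ℤ) - ((σ x : ℕ) : ℤ)).natAbs ≤
      #{y | (x, y) ∈ discordantPairs π σ} + #{y | (y, x) ∈ discordantPairs π σ} := by
  set A : Finset (Fin V) := {y | π y < π x}
  set B : Finset (Fin V) := {y | σ y < σ x}
  have hAB : #(A \ B) ≤ #{y | (y, x) ∈ discordantPairs π σ} := by
    refine card_le_card fun y hy => ?_
    have := σ.injective.eq_iff (a := x) (b := y)
    simp only [mem_sdiff, mem_filter, mem_univ, true_and, not_lt, mem_discordantPairs, A, B]
      at hy ⊢
    grind
  have hBA : #(B \ A) ≤ #{y | (x, y) ∈ discordantPairs π σ} := by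
    refine card_le_card fun y hy => ?_
    have := π.injective.eq_iff (a := x) (b := y)
    simp only [mem_sdiff, mem_filter, mem_univ, true_and, not_lt, mem_discordantPairs, A, B]
      at hy ⊢
    grind
  have hA : #A = π x := card_filter_apply_lt π x
  have hB : #B = σ x := card_filter_apply_lt σ x
  have := card_sdiff_add_card_inter A B
  have := card_sdiff_add_card_inter B A
  rw [inter_comm] at this
  omega

theorem footrule_le_two_mul_kendall (π σ : Perm (Fin V)) : footrule π σ ≤ 2 * kendall π σ :=
  calc footrule π σ
      ≤ ∑ x, (#{y | (x, y) ∈ discordantPairs π σ} +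
          #{y | (y, x) ∈ discordantPairs π σ}) :=
        sum_le_sum fun x _ => natAbs_apply_sub_apply_le π σ x
    _ = 2 * kendall π σ := by
        rw [sum_add_distrib, sum_card_filter_mk_mem_left, sum_card_filter_mk_mem_right,
          kendall_eq_card_discordantPairs, two_mul]


theorem kendall_comm (π σ : Perm (Fin V)) : kendall π σ = kendall σ π := by
  simp only [kendall_eq_card_discordantPairs]
  exact card_equiv (prodComm _ _) (by simp [and_comm])

theorem kendall_mul_right (π σ f : Perm (Fin V)) : kendall (π * f) (σ * f) = kendall π σ := by
  simp only [kendall_eq_card_discordantPairs]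
  exact card_equiv (f.prodCongr f) (by simp)

theorem kendall_triangle (π σ ρ : Perm (Fin V)) :
    kendall π σ ≤ kendall π ρ + kendall ρ σ := by
  simp only [kendall_eq_card_discordantPairs]
  refine (card_le_card fun p hp => ?_).trans (card_union_le _ _)
  have := ρ.injective.eq_iff (a := p.1) (b := p.2)
  simp only [mem_discordantPairs, mem_union] at hp ⊢
  grind

theorem kendall_one_swap_add_one_le (u v : Fin V) (h : u < v) :
    kendall 1 (swap u v) + 1 ≤ 2 * (v - u : ℕ) := by
  rw [kendall_eq_card_discordantPairs]
  have hsub : discordantPairs 1 (swap u v) ⊆ {u} ×ˢ Ioc u v ∪ Ioo u v ×ˢ {v} := by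
    rintro ⟨x, y⟩ hp
    simp only [mem_discordantPairs, Perm.one_apply] at hp
    simp only [mem_union, mem_product, mem_singleton, mem_Ioc, mem_Ioo]
    rw [swap_apply_def, swap_apply_def] at hp
    grind
  have := (card_le_card hsub).trans (card_union_le _ _)
  simp only [card_product, card_singleton, Fin.card_Ioc, Fin.card_Ioo] at this
  omega

theorem kendall_mul_swap_add_one_le (π : Perm (Fin V)) (a b : Fin V) (h : π a < π b) :
    kendall π (π * swap a b) + 1 ≤ 2 * (π b - π a : ℕ) := by
  rw [← kendall_mul_right _ _ π⁻¹, mul_inv_cancel, ← swap_apply_apply]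
  exact kendall_one_swap_add_one_le _ _ h

theorem kendall_le_kendall_mul_swap_add (π σ : Perm (Fin V)) (a b : Fin V) :
    kendall π σ ≤ kendall π (σ * swap a b) +
      min (kendall π (π * swap a b)) (kendall σ (σ * swap a b)) := by
  have hπ : kendall (π * swap a b) σ = kendall π (σ * swap a b) := by
    rw [← kendall_mul_right _ _ (swap a b), mul_swap_mul_self]
  have hσ := kendall_triangle π σ (σ * swap a b)
  rw [kendall_comm (σ * swap a b)] at hσ
  have := hπ ▸ kendall_triangle π σ (π * swap a b)
  omega

theorem footrule_mul_swap_add (π σ : Perm (Fin V)) {a b : Fin V} (hab : π b = σ a)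
    (ha : σ a < π a) (hb : σ a < σ b) :
    footrule π (σ * swap a b) + 2 * (min (π a : ℕ) (σ b) - σ a) = footrule π σ := by
  have hne : a ≠ b := by rintro rfl; exact hb.ne rfl
  unfold footrule
  rw [← sum_add_sum_compl {a, b}, ← sum_add_sum_compl {a, b} fun x => _, sum_pair hne,
    sum_pair hne]
  have hcompl :
      ∑ x ∈ {a, b}ᶜ, (((π x : ℕ) : ℤ) - (((σ * swap a b) x : ℕ) : ℤ)).natAbs =
      ∑ x ∈ {a, b}ᶜ, (((π x : ℕ) : ℤ) - ((σ x : ℕ) : ℤ)).natAbs := by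
    refine sum_congr rfl fun x hx => ?_
    simp only [mem_compl, mem_insert, mem_singleton, not_or] at hx
    rw [Perm.mul_apply, swap_apply_of_ne_of_ne hx.1 hx.2]
  rw [hcompl]
  simp only [Perm.mul_apply, swap_apply_left, swap_apply_right]
  rw [Fin.lt_def] at ha hb
  have := congrArg Fin.val hab
  omega

theorem exists_apply_eq_apply_lt_of_ne {π σ : Perm (Fin V)} (h : π ≠ σ) :
    ∃ a b, π b = σ a ∧ σ a < π a ∧ σ a < σ b := by
  obtain ⟨u, hu, hmin⟩ :
      ∃ u, π.symm u ≠ σ.symm u ∧ ∀ v < u, π.symm v = σ.symm v := by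
    have hS : ∃ u, π.symm u ≠ σ.symm u := by
      by_contra! hS
      exact h (symm_bijective.injective (Equiv.ext hS))
    obtain ⟨u, hu, hmin⟩ := wellFounded_lt.has_min {u | π.symm u ≠ σ.symm u} hS
    exact ⟨u, hu, fun v hv => by_contra fun hne => hmin v hne hv⟩
  have lt_apply_symm : ∀ {f g : Perm (Fin V)}, f.symm u ≠ g.symm u →
      (∀ v < u, f.symm v = g.symm v) → u < f (g.symm u) := by
    intro f g hu hmin
    by_contra! hle
    rcases hle.lt_or_eq with hlt | heq
    · exact hlt.ne' (by simpa using hmin _ hlt)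
    · exact hu (f.symm_apply_eq.mpr heq.symm)
  exact ⟨σ.symm u, π.symm u, by simp, by simpa using lt_apply_symm hu hmin,
    by simpa using lt_apply_symm hu.symm fun v hv => (hmin v hv).symm⟩

theorem kendall_le_footrule (π σ : Perm (Fin V)) : kendall π σ ≤ footrule π σ := by
  induction hn : footrule π σ using Nat.strong_induction_on generalizing σ with
  | _ n ih =>
  obtain rfl | hne := eq_or_ne π σ
  · simp [kendall]
  obtain ⟨a, b, hab, ha, hb⟩ := exists_apply_eq_apply_lt_of_ne hne
  have hF := footrule_mul_swap_add π σ hab ha hb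
  have hK := kendall_le_kendall_mul_swap_add π σ a b
  have hKπ := kendall_mul_swap_add_one_le π b a (hab ▸ ha)
  rw [swap_comm, hab] at hKπ
  have hKσ := kendall_mul_swap_add_one_le σ a b hb
  have := ih _ (by omega) (σ * swap a b) rfl
  omega

end

theorem footrule_kendall_equiv {V : ℕ} (π σ : Equiv.Perm (Fin V)) :
    kendall π σ ≤ footrule π σ ∧ footrule π σ ≤ 2 * kendall π σ :=
  ⟨kendall_le_footrule π σ, footrule_le_two_mul_kendall π σ⟩
end

section
/- Let ε ∈ ℝ^d have i.i.d. coordinates ε_i ~ N(0, σ²), and let x ∈ ℝ^d have distinct coordinates with minimum gap δ_min. Then the probability that argsort(x+ε) ≠ argsort(x) is at most C(d,2) · exp(−δ_min² / (4σ²)). -/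
open MeasureTheory ProbabilityTheory

/-- `π` sorts `y` in strictly descending order. -/
def SortsDesc {d : ℕ} (π : Equiv.Perm (Fin d)) (y : Fin d → ℝ) : Prop :=
  ∀ k l : Fin d, k < l → y (π l) < y (π k)

/-- Minimum gap between distinct coordinates of `x`. -/
noncomputable def deltaMin {d : ℕ} (x : Fin d → ℝ) : ℝ :=
  sInf {r : ℝ | ∃ i j : Fin d, i ≠ j ∧ r = |x i - x j|}

open scoped NNReal Finset

/-! If the noisy vector `x + ε` reverses no pair `x j < x i`, it is sorted by exactly the
permutations that sort `x`. Reversing such a pair means `ε j - ε i ≥ x i - x j ≥ δ_min`, and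
`ε j - ε i` is sub-Gaussian with variance proxy `2σ²`, so by the Chernoff bound this has
probability at most `exp (-δ_min² / (4σ²))`. A union bound over the at most `C(d,2)` pairs
finishes the proof. -/

lemma hasSubgaussianMGF_of_map_eq_gaussianReal {Ω : Type*} [MeasurableSpace Ω] {P : Measure Ω}
    {X : Ω → ℝ} (hX : AEMeasurable X P) {v : ℝ≥0} (hXv : P.map X = gaussianReal 0 v) :
    HasSubgaussianMGF X v P := by
  rw [← HasSubgaussianMGF.id_map_iff hX, hXv]
  refine ⟨integrable_exp_mul_gaussianReal, fun t => ?_⟩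
  simp [mgf_id_gaussianReal]

lemma measureReal_le_sub_le_of_gaussianReal {Ω : Type*} [MeasurableSpace Ω] {P : Measure Ω}
    {X Y : Ω → ℝ} (hX : AEMeasurable X P) (hY : AEMeasurable Y P) (hXY : IndepFun X Y P)
    {v : ℝ≥0} (hXv : P.map X = gaussianReal 0 v) (hYv : P.map Y = gaussianReal 0 v)
    {t : ℝ} (ht : 0 ≤ t) :
    P.real {ω | t ≤ Y ω - X ω} ≤ Real.exp (-t ^ 2 / (4 * v)) := by
  have h := ((hasSubgaussianMGF_of_map_eq_gaussianReal hY hYv).sub_of_indepFun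
    (hasSubgaussianMGF_of_map_eq_gaussianReal hX hXv) hXY.symm).measure_ge_le ht
  convert h using 3
  push_cast
  ring

lemma sortsDesc_iff_of_lt_imp_lt {d : ℕ} {x y : Fin d → ℝ} (hx : Function.Injective x)
    (hxy : ∀ i j, x j < x i → y j < y i) (π : Equiv.Perm (Fin d)) :
    SortsDesc π x ↔ SortsDesc π y := by
  refine ⟨fun h k l hkl => hxy _ _ (h k l hkl), fun h k l hkl => ?_⟩
  have hne : x (π k) ≠ x (π l) := hx.ne (π.injective.ne hkl.ne)
  exact hne.lt_or_gt.resolve_left fun hlt => (hxy _ _ hlt).asymm (h k l hkl)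

lemma exists_lt_and_le_of_not_forall_sortsDesc_iff {d : ℕ} {x y : Fin d → ℝ}
    (hx : Function.Injective x) (h : ¬ ∀ π, SortsDesc π x ↔ SortsDesc π y) :
    ∃ i j, x j < x i ∧ y i ≤ y j := by
  contrapose! h
  exact sortsDesc_iff_of_lt_imp_lt hx h

lemma deltaMin_nonneg {d : ℕ} (x : Fin d → ℝ) : 0 ≤ deltaMin x :=
  Real.sInf_nonneg <| by
    rintro r ⟨i, j, -, rfl⟩
    exact abs_nonneg _

lemma deltaMin_le_abs_sub {d : ℕ} (x : Fin d → ℝ) {i j : Fin d} (hij : i ≠ j) :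
    deltaMin x ≤ |x i - x j| :=
  csInf_le ⟨0, by rintro r ⟨i, j, -, rfl⟩; exact abs_nonneg _⟩ ⟨i, j, hij, rfl⟩

lemma card_filter_rel_le_choose_two {α : Type*} [Fintype α] [DecidableEq α]
    (r : α → α → Prop) [DecidableRel r] (hr : ∀ a b, r a b → ¬ r b a) :
    #{p : α × α | r p.1 p.2} ≤ (Fintype.card α).choose 2 := by
  rw [← Finset.card_univ, ← Sym2.card_image_offDiag]
  refine Finset.card_le_card_of_injOn Sym2.mk.uncurry (fun p hp => ?_) ?_
  · rw [Finset.mem_coe, Finset.mem_filter_univ] at hp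
    have hne : p.1 ≠ p.2 := fun h => hr _ _ hp (h ▸ hp)
    exact Finset.mem_image_of_mem _
      (Finset.mem_offDiag.2 ⟨Finset.mem_univ _, Finset.mem_univ _, hne⟩)
  · rintro ⟨a, b⟩ hab ⟨c, e⟩ hce h
    rcases Sym2.eq_iff.1 h with ⟨rfl, rfl⟩ | ⟨rfl, rfl⟩
    · rfl
    · simp only [Finset.coe_filter, Set.mem_ofPred_eq, Finset.mem_univ, true_and] at hab hce
      exact (hr _ _ hab hce).elim

/-- Gaussian stability bound: the probability that Gaussian noise changes the
argsort of `x` is at most `C(d,2) · exp(−δ_min² / (4σ²))`. -/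
theorem argsort_gaussian_stability {Ω : Type*} [MeasurableSpace Ω]
    (P : Measure Ω) [IsProbabilityMeasure P]
    {d : ℕ} (x : Fin d → ℝ) (hx : ∀ i j : Fin d, i ≠ j → x i ≠ x j)
    (σ : ℝ) (ε : Fin d → Ω → ℝ)
    (hmeas : ∀ i, Measurable (ε i))
    (hindep : iIndepFun ε P)
    (hgauss : ∀ i, Measure.map (ε i) P = gaussianReal 0 ⟨σ ^ 2, by positivity⟩) :
    P {ω | ¬ ∀ π : Equiv.Perm (Fin d),
        SortsDesc π x ↔ SortsDesc π (fun i => x i + ε i ω)} ≤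
      ENNReal.ofReal ((d.choose 2 : ℝ) *
        Real.exp (-(deltaMin x ^ 2) / (4 * σ ^ 2))) := by
  have hinj : Function.Injective x := fun i j hij => by_contra fun hne => hx i j hne hij
  let S : Finset (Fin d × Fin d) := {p | x p.2 < x p.1}
  let B : Fin d × Fin d → Set Ω := fun p => {ω | x p.1 - x p.2 ≤ ε p.2 ω - ε p.1 ω}
  have hsub : {ω | ¬ ∀ π : Equiv.Perm (Fin d),
      SortsDesc π x ↔ SortsDesc π (fun i => x i + ε i ω)} ⊆ ⋃ p ∈ S, B p := by
    intro ω hω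
    obtain ⟨i, j, hlt, hle⟩ := exists_lt_and_le_of_not_forall_sortsDesc_iff hinj hω
    exact Set.mem_biUnion (x := (i, j)) (by simpa [S] using hlt)
      (by simp only [B, Set.mem_ofPred_eq]; linarith)
  have hpair : ∀ p ∈ S, P.real (B p) ≤ Real.exp (-(deltaMin x ^ 2) / (4 * σ ^ 2)) := by
    intro p hp
    have hlt : x p.2 < x p.1 := (Finset.mem_filter.1 hp).2
    have hne : p.1 ≠ p.2 := fun h => hlt.ne (by rw [h])
    calc P.real (B p) ≤ Real.exp (-(x p.1 - x p.2) ^ 2 / (4 * σ ^ 2)) :=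
          measureReal_le_sub_le_of_gaussianReal (hmeas _).aemeasurable (hmeas _).aemeasurable
            (hindep.indepFun hne) (hgauss _) (hgauss _) (sub_nonneg.2 hlt.le)
      _ ≤ Real.exp (-(deltaMin x ^ 2) / (4 * σ ^ 2)) := by
        gcongr
        · exact deltaMin_nonneg x
        · exact (deltaMin_le_abs_sub x hne).trans_eq (abs_of_pos (sub_pos.2 hlt))
  have hcard : #S ≤ d.choose 2 := by
    simpa using card_filter_rel_le_choose_two (fun i j => x j < x i) fun _ _ => lt_asymm
  calc _ = ENNReal.ofReal (P.real _) := (ofReal_measureReal).symm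
    _ ≤ ENNReal.ofReal (d.choose 2 * _) := ENNReal.ofReal_le_ofReal <| calc
      _ ≤ P.real (⋃ p ∈ S, B p) := measureReal_mono hsub (measure_ne_top _ _)
      _ ≤ ∑ p ∈ S, P.real (B p) := measureReal_biUnion_finset_le S B
      _ ≤ #S * _ := by simpa using Finset.sum_le_sum hpair
      _ ≤ d.choose 2 * _ := by gcongr
end
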